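/- Fix a prior ρ ∈ R_0 with ρ_k = N(0,Σ_{ρ_k}) and set B̄_k = B_k^ρ := B_k(Σ_{ρ_k}^{−1}+I)^{−1/2}. Suppose the Riccati solution Γ_k (Γ_k = A_kᵀΓ_{k+1}A_k − A_kᵀΓ_{k+1}B_k(Σ_{ρ_k}^{−1}+I+B_kᵀΓ_{k+1}B_k)^{−1}B_kᵀΓ_{k+1}A_k, Γ_T = F) satisfies Σ_{ρ_k}^{−1}+I+B_kᵀΓ_{k+1}B_k ≻ 0 for all k. Then the Riccati solution Π_k with dynamics matrices (A_k, B̄_k) and Π_T = F satisfies Π_k = Γ_k for all k ∈ {0,…,T}, and the probability distribution of the state sequence {x_k}_{k=0}^T induced by x_{k+1} = A_k x_k + B̄_k u_k, u_k ~ N(−(I+B̄_kᵀΠ_{k+1}B̄_k)^{−1}B̄_kᵀΠ_{k+1}A_k x_k, (I+B̄_kᵀΠ_{k+1}B̄_k)^{−1}), x_0 ~ N(0,Σ_ini), coincides with the distribution induced by x_{k+1} = A_k x_k + B_k u_k, u_k ~ N(−Σ_{π̂_k^ρ}B_kᵀΓ_{k+1}A_k x_k, Σ_{π̂_k^ρ}),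 Σ_{π̂_k^ρ} = (Σ_{ρ_k}^{−1}+I+B_kᵀΓ_{k+1}B_k)^{−1}, x_0 ~ N(0,Σ_ini). -/

import Mathlib

open MeasureTheory ProbabilityTheory Matrix
open scoped Classical

noncomputable section

namespace MIDC

/-- Matrix square root of a positive semidefinite matrix (junk value `0` otherwise). -/
def msqrt {n : ℕ} (A : Matrix (Fin n) (Fin n) ℝ) : Matrix (Fin n) (Fin n) ℝ :=
  if h : A.PosSemidef then
    (h.1.eigenvectorUnitary : Matrix (Fin n) (Fin n) ℝ) *
      diagonal ((RCLike.ofReal : ℝ → ℝ) ∘ Real.sqrt ∘ h.1.eigenvalues) *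
      (star h.1.eigenvectorUnitary : Matrix (Fin n) (Fin n) ℝ)
  else 0

/-- Moore–Penrose pseudoinverse of a real matrix. -/
def pinv {n m : ℕ} (B : Matrix (Fin n) (Fin m) ℝ) : Matrix (Fin m) (Fin n) ℝ :=
  if h : ∃ X : Matrix (Fin m) (Fin n) ℝ,
      B * X * B = B ∧ X * B * X = X ∧ (B * X)ᵀ = B * X ∧ (X * B)ᵀ = X * B then
    h.choose
  else 0

/-- Standard Gaussian measure on `ℝ^m`. -/
def stdGaussian (m : ℕ) : Measure (Fin m → ℝ) :=
  Measure.pi fun _ => gaussianReal 0 1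

/-- Gaussian measure `N(μ, Λ)` on `ℝ^n` (meaningful for `Λ` positive semidefinite). -/
def gaussian {n : ℕ} (μ : Fin n → ℝ) (Λ : Matrix (Fin n) (Fin n) ℝ) : Measure (Fin n → ℝ) :=
  (stdGaussian n).map fun z => μ + (msqrt Λ).mulVec z

/-- (Real-valued) Kullback–Leibler divergence `D_KL[μ ‖ ν]`. -/
def KLr {α : Type*} [MeasurableSpace α] (μ ν : Measure α) : ℝ :=
  ∫ x, Real.log (μ.rnDeriv ν x).toReal ∂μ

/-- Differential entropy of a measure on `ℝ^m`. -/
def diffEntropy {m : ℕ} (μ : Measure (Fin m → ℝ)) : ℝ :=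
  - ∫ x, Real.log (μ.rnDeriv volume x).toReal ∂μ

/-- Mean vector of a measure on `ℝ^n`. -/
def meanVec {n : ℕ} (μ : Measure (Fin n → ℝ)) : Fin n → ℝ := fun i => ∫ x, x i ∂μ

/-- Covariance matrix of a measure on `ℝ^n`. -/
def covMatrix {n : ℕ} (μ : Measure (Fin n → ℝ)) : Matrix (Fin n) (Fin n) ℝ :=
  Matrix.of fun i j => ∫ x, (x i - meanVec μ i) * (x j - meanVec μ j) ∂μ

variable {n m T : ℕ}

/-- A (stochastic, state-feedback) policy: a Markov kernel from states to inputs at each time. -/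
abbrev Policy (n m T : ℕ) := Fin T → Kernel (Fin n → ℝ) (Fin m → ℝ)

/-- Admissibility: each kernel is a Markov (probability) kernel. -/
def Markovian (π : Policy n m T) : Prop := ∀ k, IsMarkovKernel (π k)

/-- Marginal distribution at time `k` of the time-inhomogeneous Markov chain with initial
distribution `μ0` and transition maps `f`. -/
def chain (μ0 : Measure (Fin n → ℝ)) (f : Fin T → (Fin n → ℝ) → Measure (Fin n → ℝ)) :
    ℕ → Measure (Fin n → ℝ)
  | 0 => μ0
  | k + 1 => if h : k < T then (chain μ0 f k).bind fun x => f ⟨k, h⟩ x else chain μ0 f k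

/-- State transition measure of `x_{k+1} = A_k x_k + B_k u_k`, `u_k ~ π_k(·|x_k)`. -/
def trans (A : Fin T → Matrix (Fin n) (Fin n) ℝ) (B : Fin T → Matrix (Fin n) (Fin m) ℝ)
    (π : Policy n m T) (k : Fin T) (x : Fin n → ℝ) : Measure (Fin n → ℝ) :=
  (π k x).map fun u => (A k).mulVec x + (B k).mulVec u

/-- State distribution at time `k` under policy `π`, with `x_0 ~ N(0, Sini)`. -/
def stateDist (A : Fin T → Matrix (Fin n) (Fin n) ℝ) (B : Fin T → Matrix (Fin n) (Fin m) ℝ)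
    (Sini : Matrix (Fin n) (Fin n) ℝ) (π : Policy n m T) : ℕ → Measure (Fin n → ℝ) :=
  chain (gaussian 0 Sini) (trans A B π)

/-- MaxEnt optimal control cost (with terminal weight `F`). -/
def MEcost (A : Fin T → Matrix (Fin n) (Fin n) ℝ) (B : Fin T → Matrix (Fin n) (Fin m) ℝ)
    (Sini F : Matrix (Fin n) (Fin n) ℝ) (π : Policy n m T) : ℝ :=
  (∑ k : Fin T, ∫ x,
      ((∫ u, (1/2 : ℝ) * (u ⬝ᵥ u) ∂(π k x)) - diffEntropy (π k x))
      ∂(stateDist A B Sini π k)) +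
    (1/2 : ℝ) * ∫ x, x ⬝ᵥ F.mulVec x ∂(stateDist A B Sini π T)

/-- MaxEnt density control cost (no terminal cost). -/
def MEcostD (A : Fin T → Matrix (Fin n) (Fin n) ℝ) (B : Fin T → Matrix (Fin n) (Fin m) ℝ)
    (Sini : Matrix (Fin n) (Fin n) ℝ) (π : Policy n m T) : ℝ :=
  ∑ k : Fin T, ∫ x,
    ((∫ u, (1/2 : ℝ) * (u ⬝ᵥ u) ∂(π k x)) - diffEntropy (π k x))
    ∂(stateDist A B Sini π k)

/-- MI optimal control cost with terminal weight `F` and Gaussian prior `ρ_k = N(mrho_k, Srho_k)`. -/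
def MIcost (A : Fin T → Matrix (Fin n) (Fin n) ℝ) (B : Fin T → Matrix (Fin n) (Fin m) ℝ)
    (Sini F : Matrix (Fin n) (Fin n) ℝ) (mrho : Fin T → Fin m → ℝ)
    (Srho : Fin T → Matrix (Fin m) (Fin m) ℝ) (π : Policy n m T) : ℝ :=
  (∑ k : Fin T, ∫ x,
      ((∫ u, (1/2 : ℝ) * (u ⬝ᵥ u) ∂(π k x)) + KLr (π k x) (gaussian (mrho k) (Srho k)))
      ∂(stateDist A B Sini π k)) +
    (1/2 : ℝ) * ∫ x, x ⬝ᵥ F.mulVec x ∂(stateDist A B Sini π T)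

/-- MI density control cost with Gaussian prior `ρ_k = N(mrho_k, Srho_k)` (no terminal cost). -/
def MIcostD (A : Fin T → Matrix (Fin n) (Fin n) ℝ) (B : Fin T → Matrix (Fin n) (Fin m) ℝ)
    (Sini : Matrix (Fin n) (Fin n) ℝ) (mrho : Fin T → Fin m → ℝ)
    (Srho : Fin T → Matrix (Fin m) (Fin m) ℝ) (π : Policy n m T) : ℝ :=
  ∑ k : Fin T, ∫ x,
    ((∫ u, (1/2 : ℝ) * (u ⬝ᵥ u) ∂(π k x)) + KLr (π k x) (gaussian (mrho k) (Srho k)))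
    ∂(stateDist A B Sini π k)

/-! Gramians and transition matrices -/

/-- Extend `Fin T`-indexed square matrices to `ℕ` (identity beyond the horizon). -/
def extM (A : Fin T → Matrix (Fin n) (Fin n) ℝ) : ℕ → Matrix (Fin n) (Fin n) ℝ :=
  fun k => if h : k < T then A ⟨k, h⟩ else 1

/-- Extend `Fin T`-indexed input matrices to `ℕ` (zero beyond the horizon). -/
def extB (B : Fin T → Matrix (Fin n) (Fin m) ℝ) : ℕ → Matrix (Fin n) (Fin m) ℝ :=
  fun k => if h : k < T then B ⟨k, h⟩ else 0

/-- `PhiUp A l k = A_{k-1} ⋯ A_l` for `k ≥ l` (junk `1` otherwise). -/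
def PhiUp (A : ℕ → Matrix (Fin n) (Fin n) ℝ) (l : ℕ) : ℕ → Matrix (Fin n) (Fin n) ℝ
  | 0 => 1
  | k + 1 => if l ≤ k then A k * PhiUp A l k else 1

/-- State-transition matrix `Φ(k, l)`. -/
def Phi (A : ℕ → Matrix (Fin n) (Fin n) ℝ) (k l : ℕ) : Matrix (Fin n) (Fin n) ℝ :=
  if l ≤ k then PhiUp A l k else (PhiUp A k l)⁻¹

/-- Reachability Gramian `G_r(k1, k0)`. -/
def Gr (A : ℕ → Matrix (Fin n) (Fin n) ℝ) (B : ℕ → Matrix (Fin n) (Fin m) ℝ)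
    (k1 k0 : ℕ) : Matrix (Fin n) (Fin n) ℝ :=
  ∑ k ∈ Finset.Ico k0 k1, Phi A k1 (k + 1) * B k * (B k)ᵀ * (Phi A k1 (k + 1))ᵀ

/-- Controllability Gramian `G_c(k1, k0)`. -/
def Gc (A : ℕ → Matrix (Fin n) (Fin n) ℝ) (B : ℕ → Matrix (Fin n) (Fin m) ℝ)
    (k1 k0 : ℕ) : Matrix (Fin n) (Fin n) ℝ :=
  ∑ k ∈ Finset.Ico k0 k1, Phi A k0 (k + 1) * B k * (B k)ᵀ * (Phi A k0 (k + 1))ᵀ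

/-- `G_c(T, 0)` for the system `(A, B)` on horizon `T`. -/
def GcT (A : Fin T → Matrix (Fin n) (Fin n) ℝ) (B : Fin T → Matrix (Fin n) (Fin m) ℝ) :
    Matrix (Fin n) (Fin n) ℝ :=
  Gc (extM A) (extB B) T 0

/-- `S_0 := G_c(T,0)^{-1/2} Sini G_c(T,0)^{-1/2}`. -/
def S0mat (A : Fin T → Matrix (Fin n) (Fin n) ℝ) (B : Fin T → Matrix (Fin n) (Fin m) ℝ)
    (Sini : Matrix (Fin n) (Fin n) ℝ) : Matrix (Fin n) (Fin n) ℝ :=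
  (msqrt (GcT A B))⁻¹ * Sini * (msqrt (GcT A B))⁻¹

/-- `S_T := G_c(T,0)^{-1/2} Φ(0,T) Sfin Φ(0,T)ᵀ G_c(T,0)^{-1/2}`. -/
def STmat (A : Fin T → Matrix (Fin n) (Fin n) ℝ) (B : Fin T → Matrix (Fin n) (Fin m) ℝ)
    (Sfin : Matrix (Fin n) (Fin n) ℝ) : Matrix (Fin n) (Fin n) ℝ :=
  (msqrt (GcT A B))⁻¹ * Phi (extM A) 0 T * Sfin * (Phi (extM A) 0 T)ᵀ * (msqrt (GcT A B))⁻¹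

/-- `𝓕 := S_0 + (1/2)I − (S_0^{1/2} S_T S_0^{1/2} + (1/4)I)^{1/2}`. -/
def calF (A : Fin T → Matrix (Fin n) (Fin n) ℝ) (B : Fin T → Matrix (Fin n) (Fin m) ℝ)
    (Sini Sfin : Matrix (Fin n) (Fin n) ℝ) : Matrix (Fin n) (Fin n) ℝ :=
  S0mat A B Sini + (1/2 : ℝ) • (1 : Matrix (Fin n) (Fin n) ℝ) -
    msqrt (msqrt (S0mat A B Sini) * STmat A B Sfin * msqrt (S0mat A B Sini) +
      (1/4 : ℝ) • (1 : Matrix (Fin n) (Fin n) ℝ))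

/-- `−S_0 + (1/2)I + (S_0^{1/2} S_T S_0^{1/2} + (1/4)I)^{1/2}`. -/
def calF2 (A : Fin T → Matrix (Fin n) (Fin n) ℝ) (B : Fin T → Matrix (Fin n) (Fin m) ℝ)
    (Sini Sfin : Matrix (Fin n) (Fin n) ℝ) : Matrix (Fin n) (Fin n) ℝ :=
  - S0mat A B Sini + (1/2 : ℝ) • (1 : Matrix (Fin n) (Fin n) ℝ) +
    msqrt (msqrt (S0mat A B Sini) * STmat A B Sfin * msqrt (S0mat A B Sini) +
      (1/4 : ℝ) • (1 : Matrix (Fin n) (Fin n) ℝ))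

/-- Assumption (G): regularity assumptions for covariance steering. -/
def AssumpG (A : Fin T → Matrix (Fin n) (Fin n) ℝ) (B : Fin T → Matrix (Fin n) (Fin m) ℝ)
    (Sini Sfin : Matrix (Fin n) (Fin n) ℝ) : Prop :=
  (∀ k : Fin T, IsUnit (A k)) ∧
  (∃ kr, 1 ≤ kr ∧ kr ≤ T ∧
    (∀ k, kr ≤ k → k ≤ T → IsUnit (Gr (extM A) (extB B) k 0)) ∧
    (∀ k, k < kr → IsUnit (Gr (extM A) (extB B) T k))) ∧
  IsUnit (calF A B Sini Sfin) ∧ IsUnit (calF2 A B Sini Sfin)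

/-- Solution of the Lyapunov difference equation `Q_{k+1} = A_k Q_k A_kᵀ − B_k B_kᵀ`. -/
def lyap (A : ℕ → Matrix (Fin n) (Fin n) ℝ) (B : ℕ → Matrix (Fin n) (Fin m) ℝ)
    (Q0 : Matrix (Fin n) (Fin n) ℝ) : ℕ → Matrix (Fin n) (Fin n) ℝ
  | 0 => Q0
  | k + 1 => A k * lyap A B Q0 k * (A k)ᵀ - B k * (B k)ᵀ

/-- The initial condition `Q_0 = G_c(T,0)^{1/2} S_0^{1/2} 𝓕^{-1} S_0^{1/2} G_c(T,0)^{1/2}`. -/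
def Q0mat (A : Fin T → Matrix (Fin n) (Fin n) ℝ) (B : Fin T → Matrix (Fin n) (Fin m) ℝ)
    (Sini Sfin : Matrix (Fin n) (Fin n) ℝ) : Matrix (Fin n) (Fin n) ℝ :=
  msqrt (GcT A B) * msqrt (S0mat A B Sini) * (calF A B Sini Sfin)⁻¹ *
    msqrt (S0mat A B Sini) * msqrt (GcT A B)

/-- `Q_k`, the solution of the Lyapunov equation with the steering initial condition. -/
def Qmat (A : Fin T → Matrix (Fin n) (Fin n) ℝ) (B : Fin T → Matrix (Fin n) (Fin m) ℝ)
    (Sini Sfin : Matrix (Fin n) (Fin n) ℝ) : ℕ → Matrix (Fin n) (Fin n) ℝ :=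
  lyap (extM A) (extB B) (Q0mat A B Sini Sfin)

/-! Riccati equations and closed-loop distributions -/

/-- The MaxEnt Riccati backward recursion. -/
def riccatiME (A : Fin T → Matrix (Fin n) (Fin n) ℝ) (B : Fin T → Matrix (Fin n) (Fin m) ℝ)
    (Pm : Fin (T + 1) → Matrix (Fin n) (Fin n) ℝ) : Prop :=
  ∀ k : Fin T, Pm k.castSucc =
    (A k)ᵀ * Pm k.succ * A k -
      (A k)ᵀ * Pm k.succ * B k *
        ((1 : Matrix (Fin m) (Fin m) ℝ) + (B k)ᵀ * Pm k.succ * B k)⁻¹ *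
        (B k)ᵀ * Pm k.succ * A k

/-- Covariance of the MaxEnt optimal policy at time `k`. -/
def MEpolCov (B : Fin T → Matrix (Fin n) (Fin m) ℝ)
    (Pm : Fin (T + 1) → Matrix (Fin n) (Fin n) ℝ) (k : Fin T) : Matrix (Fin m) (Fin m) ℝ :=
  ((1 : Matrix (Fin m) (Fin m) ℝ) + (B k)ᵀ * Pm k.succ * B k)⁻¹

/-- Mean of the MaxEnt optimal policy at time `k` and state `x`. -/
def MEpolMean (A : Fin T → Matrix (Fin n) (Fin n) ℝ) (B : Fin T → Matrix (Fin n) (Fin m) ℝ)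
    (Pm : Fin (T + 1) → Matrix (Fin n) (Fin n) ℝ) (k : Fin T) (x : Fin n → ℝ) : Fin m → ℝ :=
  -((MEpolCov B Pm k * (B k)ᵀ * Pm k.succ * A k).mulVec x)

/-- Closed-loop state distribution under the MaxEnt optimal policy determined by `Pm`. -/
def closedLoopME (A : Fin T → Matrix (Fin n) (Fin n) ℝ) (B : Fin T → Matrix (Fin n) (Fin m) ℝ)
    (Sini : Matrix (Fin n) (Fin n) ℝ) (Pm : Fin (T + 1) → Matrix (Fin n) (Fin n) ℝ) :
    ℕ → Measure (Fin n → ℝ) :=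
  chain (gaussian 0 Sini) fun k x =>
    (gaussian (MEpolMean A B Pm k x) (MEpolCov B Pm k)).map fun u =>
      (A k).mulVec x + (B k).mulVec u

/-- The MI Riccati backward recursion for a fixed zero-mean Gaussian prior with
covariances `Srho`. -/
def riccatiMI (A : Fin T → Matrix (Fin n) (Fin n) ℝ) (B : Fin T → Matrix (Fin n) (Fin m) ℝ)
    (Srho : Fin T → Matrix (Fin m) (Fin m) ℝ)
    (Γ : Fin (T + 1) → Matrix (Fin n) (Fin n) ℝ) : Prop :=
  ∀ k : Fin T, Γ k.castSucc =
    (A k)ᵀ * Γ k.succ * A k -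
      (A k)ᵀ * Γ k.succ * B k *
        ((Srho k)⁻¹ + 1 + (B k)ᵀ * Γ k.succ * B k)⁻¹ *
        (B k)ᵀ * Γ k.succ * A k

/-- Covariance of the MI optimal policy at time `k`. -/
def MIpolCov (B : Fin T → Matrix (Fin n) (Fin m) ℝ) (Srho : Fin T → Matrix (Fin m) (Fin m) ℝ)
    (Γ : Fin (T + 1) → Matrix (Fin n) (Fin n) ℝ) (k : Fin T) : Matrix (Fin m) (Fin m) ℝ :=
  ((Srho k)⁻¹ + 1 + (B k)ᵀ * Γ k.succ * B k)⁻¹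

/-- Mean of the MI optimal policy at time `k` and state `x`. -/
def MIpolMean (A : Fin T → Matrix (Fin n) (Fin n) ℝ) (B : Fin T → Matrix (Fin n) (Fin m) ℝ)
    (Srho : Fin T → Matrix (Fin m) (Fin m) ℝ) (Γ : Fin (T + 1) → Matrix (Fin n) (Fin n) ℝ)
    (k : Fin T) (x : Fin n → ℝ) : Fin m → ℝ :=
  -((MIpolCov B Srho Γ k * (B k)ᵀ * Γ k.succ * A k).mulVec x)

/-- Closed-loop state distribution under the MI optimal policy determined by `Γ`. -/
def closedLoopMI (A : Fin T → Matrix (Fin n) (Fin n) ℝ) (B : Fin T → Matrix (Fin n) (Fin m) ℝ)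
    (Sini : Matrix (Fin n) (Fin n) ℝ) (Srho : Fin T → Matrix (Fin m) (Fin m) ℝ)
    (Γ : Fin (T + 1) → Matrix (Fin n) (Fin n) ℝ) : ℕ → Measure (Fin n → ℝ) :=
  chain (gaussian 0 Sini) fun k x =>
    (gaussian (MIpolMean A B Srho Γ k x) (MIpolCov B Srho Γ k)).map fun u =>
      (A k).mulVec x + (B k).mulVec u

/-! Path-space (Schrödinger bridge) objects -/

/-- Auxiliary construction of the path measure of a Markov chain. -/
def pathAux (μ0 : Measure (Fin n → ℝ)) (f : Fin T → (Fin n → ℝ) → Measure (Fin n → ℝ)) :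
    ℕ → Measure (Fin (T + 1) → Fin n → ℝ)
  | 0 => μ0.map fun x _ => x
  | k + 1 =>
    if h : k < T then
      (pathAux μ0 f k).bind fun ω =>
        (f ⟨k, h⟩ (ω ⟨k, by omega⟩)).map fun y => Function.update ω ⟨k + 1, by omega⟩ y
    else pathAux μ0 f k

/-- The law on path space `χ = (ℝ^n)^{T+1}` of the Markov chain with initial distribution `μ0`
and transition maps `f`. -/
def pathMeasure (μ0 : Measure (Fin n → ℝ))
    (f : Fin T → (Fin n → ℝ) → Measure (Fin n → ℝ)) : Measure (Fin (T + 1) → Fin n → ℝ) :=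
  pathAux μ0 f T

/-- The law `Q^ρ` on path space of the reference process
`x_{k+1} = A_k x_k + B_k w_k`, `w_k ~ N(mrho_k, Srho_k)`, `x_0 ~ N(mref, Sref)`. -/
def refLaw (A : Fin T → Matrix (Fin n) (Fin n) ℝ) (B : Fin T → Matrix (Fin n) (Fin m) ℝ)
    (mref : Fin n → ℝ) (Sref : Matrix (Fin n) (Fin n) ℝ)
    (mrho : Fin T → Fin m → ℝ) (Srho : Fin T → Matrix (Fin m) (Fin m) ℝ) :
    Measure (Fin (T + 1) → Fin n → ℝ) :=
  pathMeasure (gaussian mref Sref) fun k x =>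
    (gaussian (mrho k) (Srho k)).map fun w => (A k).mulVec x + (B k).mulVec w

/-- The law `P^π` on path space of the controlled process
`x_{k+1} = A_k x_k + B_k u_k`, `u_k` drawn from the state-dependent input distributions `f`,
`x_0 ~ N(0, Sini)`. -/
def ctrlLaw (A : Fin T → Matrix (Fin n) (Fin n) ℝ) (B : Fin T → Matrix (Fin n) (Fin m) ℝ)
    (Sini : Matrix (Fin n) (Fin n) ℝ) (f : Fin T → (Fin n → ℝ) → Measure (Fin m → ℝ)) :
    Measure (Fin (T + 1) → Fin n → ℝ) :=
  pathMeasure (gaussian 0 Sini) fun k x =>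
    (f k x).map fun u => (A k).mulVec x + (B k).mulVec u

/-- The regularization potential `V(x_0, …, x_T) = Σ_k ½‖x_{k+1} − A_k x_k‖²_{B_k^{†ᵀ}B_k^†}`. -/
def Vfun (A : Fin T → Matrix (Fin n) (Fin n) ℝ) (B : Fin T → Matrix (Fin n) (Fin m) ℝ)
    (ω : Fin (T + 1) → Fin n → ℝ) : ℝ :=
  ∑ k : Fin T, (1/2 : ℝ) *
    ((ω k.succ - (A k).mulVec (ω k.castSucc)) ⬝ᵥ
      ((pinv (B k))ᵀ * pinv (B k)).mulVec (ω k.succ - (A k).mulVec (ω k.castSucc)))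

/-- The generalized Schrödinger bridge objective `D_KL[P‖Q] + E_P[V]`. -/
def gsbObj (A : Fin T → Matrix (Fin n) (Fin n) ℝ) (B : Fin T → Matrix (Fin n) (Fin m) ℝ)
    (Q P : Measure (Fin (T + 1) → Fin n → ℝ)) : ℝ :=
  KLr P Q + ∫ ω, Vfun A B ω ∂P

/-- Membership in `Π((μini,Sini), (μfin,Sfin))`: probability measures on path space with the
prescribed Gaussian marginals at times `0` and `T`. -/
def memBridgeμ (μini : Fin n → ℝ) (Sini : Matrix (Fin n) (Fin n) ℝ) (μfin : Fin n → ℝ)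
    (Sfin : Matrix (Fin n) (Fin n) ℝ) (P : Measure (Fin (T + 1) → Fin n → ℝ)) : Prop :=
  IsProbabilityMeasure P ∧ P.map (fun ω => ω 0) = gaussian μini Sini ∧
    P.map (fun ω => ω (Fin.last T)) = gaussian μfin Sfin

/-- Membership in `Π(Sini, Sfin)` (zero-mean marginal constraints). -/
def memBridge (Sini Sfin : Matrix (Fin n) (Fin n) ℝ)
    (P : Measure (Fin (T + 1) → Fin n → ℝ)) : Prop :=
  memBridgeμ 0 Sini 0 Sfin P

/-- State covariance recursion `Σ_{x_{k+1}} = (A_k + B_k P_k) Σ_{x_k} (A_k + B_k P_k)ᵀ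
+ B_k Spi_k B_kᵀ`, `Σ_{x_0} = Sini`, under a policy in `P_0`. -/
def covSeq (A : Fin T → Matrix (Fin n) (Fin n) ℝ) (B : Fin T → Matrix (Fin n) (Fin m) ℝ)
    (Pg : Fin T → Matrix (Fin m) (Fin n) ℝ) (Spi : Fin T → Matrix (Fin m) (Fin m) ℝ)
    (Sini : Matrix (Fin n) (Fin n) ℝ) : ℕ → Matrix (Fin n) (Fin n) ℝ
  | 0 => Sini
  | k + 1 =>
    if h : k < T then
      (A ⟨k, h⟩ + B ⟨k, h⟩ * Pg ⟨k, h⟩) * covSeq A B Pg Spi Sini k *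
          (A ⟨k, h⟩ + B ⟨k, h⟩ * Pg ⟨k, h⟩)ᵀ +
        B ⟨k, h⟩ * Spi ⟨k, h⟩ * (B ⟨k, h⟩)ᵀ
    else covSeq A B Pg Spi Sini k

/-- `F` steers the terminal covariance to `Sfin` under the MaxEnt optimal policy obtained from
the Riccati solution with terminal condition `F`. -/
def steersME (A : Fin T → Matrix (Fin n) (Fin n) ℝ) (B : Fin T → Matrix (Fin n) (Fin m) ℝ)
    (Sini Sfin : Matrix (Fin n) (Fin n) ℝ) (F : Matrix (Fin n) (Fin n) ℝ) : Prop :=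
  ∀ Pm : Fin (T + 1) → Matrix (Fin n) (Fin n) ℝ, riccatiME A B Pm → Pm (Fin.last T) = F →
    covMatrix (closedLoopME A B Sini Pm T) = Sfin

/-- `F` steers the terminal covariance to `Sfin` under the MI optimal policy obtained from
the Riccati solution with terminal condition `F` (for the fixed zero-mean Gaussian prior with
covariances `Srho`). -/
def steersMI (A : Fin T → Matrix (Fin n) (Fin n) ℝ) (B : Fin T → Matrix (Fin n) (Fin m) ℝ)
    (Sini Sfin : Matrix (Fin n) (Fin n) ℝ) (Srho : Fin T → Matrix (Fin m) (Fin m) ℝ)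
    (F : Matrix (Fin n) (Fin n) ℝ) : Prop :=
  ∀ Γ : Fin (T + 1) → Matrix (Fin n) (Fin n) ℝ, riccatiMI A B Srho Γ → Γ (Fin.last T) = F →
    covMatrix (closedLoopMI A B Sini Srho Γ T) = Sfin

/-- `πhat` is the unique optimal policy of the MaxEnt optimal control problem with terminal
weight `F`. -/
def uniqOptSoftME (A : Fin T → Matrix (Fin n) (Fin n) ℝ) (B : Fin T → Matrix (Fin n) (Fin m) ℝ)
    (Sini F : Matrix (Fin n) (Fin n) ℝ) (πhat : Policy n m T) : Prop :=
  Markovian πhat ∧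
  (∀ π : Policy n m T, Markovian π → MEcost A B Sini F πhat ≤ MEcost A B Sini F π) ∧
  (∀ π : Policy n m T, Markovian π →
    (∀ π' : Policy n m T, Markovian π' → MEcost A B Sini F π ≤ MEcost A B Sini F π') →
    ∀ (k : Fin T) (x : Fin n → ℝ), π k x = πhat k x)

/-- `F` makes the terminal state covariance equal to `Sfin` under the unique optimal policy of
the MaxEnt optimal control problem with terminal weight `F`. -/
def steersOptME (A : Fin T → Matrix (Fin n) (Fin n) ℝ) (B : Fin T → Matrix (Fin n) (Fin m) ℝ)
    (Sini Sfin F : Matrix (Fin n) (Fin n) ℝ) : Prop :=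
  ∃ πhat : Policy n m T, uniqOptSoftME A B Sini F πhat ∧
    covMatrix (stateDist A B Sini πhat T) = Sfin

/-- `πhat` is the unique optimal policy of the soft terminal constrained MI optimal control
problem with terminal weight `F` and fixed zero-mean Gaussian prior with covariances `Srho`. -/
def uniqOptSoftMI (A : Fin T → Matrix (Fin n) (Fin n) ℝ) (B : Fin T → Matrix (Fin n) (Fin m) ℝ)
    (Sini F : Matrix (Fin n) (Fin n) ℝ) (Srho : Fin T → Matrix (Fin m) (Fin m) ℝ)
    (πhat : Policy n m T) : Prop :=
  Markovian πhat ∧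
  (∀ π : Policy n m T, Markovian π →
    MIcost A B Sini F (fun _ => 0) Srho πhat ≤ MIcost A B Sini F (fun _ => 0) Srho π) ∧
  (∀ π : Policy n m T, Markovian π →
    (∀ π' : Policy n m T, Markovian π' →
      MIcost A B Sini F (fun _ => 0) Srho π ≤ MIcost A B Sini F (fun _ => 0) Srho π') →
    ∀ (k : Fin T) (x : Fin n → ℝ), π k x = πhat k x)

/-- `F` makes the terminal state covariance equal to `Sfin` under the unique optimal policy of
the soft terminal constrained MI optimal control problem with terminal weight `F`. -/
def steersOptMI (A : Fin T → Matrix (Fin n) (Fin n) ℝ) (B : Fin T → Matrix (Fin n) (Fin m) ℝ)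
    (Sini Sfin : Matrix (Fin n) (Fin n) ℝ) (Srho : Fin T → Matrix (Fin m) (Fin m) ℝ)
    (F : Matrix (Fin n) (Fin n) ℝ) : Prop :=
  ∃ πhat : Policy n m T, uniqOptSoftMI A B Sini F Srho πhat ∧
    covMatrix (stateDist A B Sini πhat T) = Sfin

/-- Feasibility for the density control problems: admissible policy meeting the terminal
Gaussian density constraint. -/
def feasD (A : Fin T → Matrix (Fin n) (Fin n) ℝ) (B : Fin T → Matrix (Fin n) (Fin m) ℝ)
    (Sini Sfin : Matrix (Fin n) (Fin n) ℝ) (π : Policy n m T) : Prop :=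
  Markovian π ∧ stateDist A B Sini π T = gaussian 0 Sfin

/-!
With `G_k = (Σ_{ρ_k}⁻¹ + I)^{1/2}` and `B̄_k = B_k G_k⁻¹` one has
`I + B̄_kᵀ P B̄_k = G_k⁻¹ (Σ_{ρ_k}⁻¹ + I + B_kᵀ P B_k) G_k⁻¹`, so the two Riccati recursions have
the same right-hand side and `Π = Γ` by backward induction. The same identity shows that the
MaxEnt input law `N(G_k μ_k, G_k K_k G_k)` is the image under `G_k` of the MI input law
`N(μ_k, K_k)`: a Gaussian is pushed forward by an invertible linear map by rotating the standard
Gaussian, which is invariant under orthogonal matrices. As `B̄_k G_k = B_k`, both closed loops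
then have the same transition kernels.
-/

open scoped MatrixOrder

lemma msqrt_eq_cfcSqrt {k : ℕ} {M : Matrix (Fin k) (Fin k) ℝ} (hM : M.PosSemidef) :
    msqrt M = CFC.sqrt M := by
  rw [msqrt, dif_pos hM, CFC.sqrt_eq_real_sqrt M hM.nonneg, cfcₙ_eq_cfc, hM.1.cfc_eq,
    IsHermitian.cfc, Unitary.conjStarAlgAut_apply]

lemma msqrt_mul_self {k : ℕ} {M : Matrix (Fin k) (Fin k) ℝ} (hM : M.PosSemidef) :
    msqrt M * msqrt M = M := by
  rw [msqrt_eq_cfcSqrt hM, CFC.sqrt_mul_sqrt_self M hM.nonneg]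

lemma posSemidef_msqrt {k : ℕ} {M : Matrix (Fin k) (Fin k) ℝ} (hM : M.PosSemidef) :
    (msqrt M).PosSemidef := by
  rw [msqrt_eq_cfcSqrt hM]; exact (CFC.sqrt_nonneg M).posSemidef

lemma transpose_msqrt {k : ℕ} {M : Matrix (Fin k) (Fin k) ℝ} (hM : M.PosSemidef) :
    (msqrt M)ᵀ = msqrt M :=
  (posSemidef_msqrt hM).1

lemma isUnit_det_msqrt {k : ℕ} {M : Matrix (Fin k) (Fin k) ℝ} (hM : M.PosDef) :
    IsUnit (msqrt M).det := by
  have h := congrArg det (msqrt_mul_self hM.posSemidef)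
  rw [det_mul] at h
  exact isUnit_of_mul_isUnit_left (h ▸ hM.det_pos.ne'.isUnit)

lemma stdGaussian_eq_map_ofLp (m : ℕ) :
    stdGaussian m = (ProbabilityTheory.stdGaussian (EuclideanSpace ℝ (Fin m))).map WithLp.ofLp := by
  rw [← map_pi_eq_stdGaussian, Measure.map_map (by fun_prop) (by fun_prop)]
  exact Measure.map_id.symm

lemma stdGaussian_map_mulVec_of_mem_orthogonalGroup {m : ℕ} {Q : Matrix (Fin m) (Fin m) ℝ}
    (hQ : Q ∈ orthogonalGroup (Fin m) ℝ) :
    (stdGaussian m).map (Q *ᵥ ·) = stdGaussian m := by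
  let e := Unitary.linearIsometryEquiv ⟨toEuclideanCLM (𝕜 := ℝ) Q, Unitary.map_mem _ hQ⟩
  have he : (Q *ᵥ ·) ∘ WithLp.ofLp = WithLp.ofLp ∘ e := rfl
  rw [stdGaussian_eq_map_ofLp, Measure.map_map (by fun_prop) (by fun_prop), he,
    ← Measure.map_map (by fun_prop) (by fun_prop), stdGaussian_map]

lemma inv_mul_mem_orthogonalGroup {k : ℕ} {V X : Matrix (Fin k) (Fin k) ℝ} (hV : IsUnit V.det)
    (hVt : Vᵀ = V) (hX : X * Xᵀ = V * V) : V⁻¹ * X ∈ orthogonalGroup (Fin k) ℝ := by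
  rw [mem_orthogonalGroup_iff, transpose_mul, transpose_nonsing_inv, hVt, Matrix.mul_assoc,
    ← Matrix.mul_assoc X, hX, Matrix.mul_assoc, mul_nonsing_inv _ hV, Matrix.mul_one,
    nonsing_inv_mul _ hV]

lemma gaussian_map_mulVec {k : ℕ} {G Λ : Matrix (Fin k) (Fin k) ℝ} (hG : IsUnit G.det)
    (hΛ : Λ.PosDef) (μ : Fin k → ℝ) :
    (gaussian μ Λ).map (G *ᵥ ·) = gaussian (G *ᵥ μ) (G * Λ * Gᵀ) := by
  have hGΛ : (G * Λ * Gᵀ).PosDef :=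
    hΛ.mul_mul_conjTranspose_same (vecMul_injective_of_isUnit ((isUnit_iff_isUnit_det G).2 hG))
  have hV : IsUnit (msqrt (G * Λ * Gᵀ)).det := isUnit_det_msqrt hGΛ
  have hO : (msqrt (G * Λ * Gᵀ))⁻¹ * (G * msqrt Λ) ∈ orthogonalGroup (Fin k) ℝ := by
    refine inv_mul_mem_orthogonalGroup hV (transpose_msqrt hGΛ.posSemidef) ?_
    rw [msqrt_mul_self hGΛ.posSemidef, transpose_mul, transpose_msqrt hΛ.posSemidef,
      Matrix.mul_assoc, ← Matrix.mul_assoc (msqrt Λ), msqrt_mul_self hΛ.posSemidef,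
      Matrix.mul_assoc]
  calc (gaussian μ Λ).map (G *ᵥ ·)
      = ((stdGaussian k).map (((msqrt (G * Λ * Gᵀ))⁻¹ * (G * msqrt Λ)) *ᵥ ·)).map
          (fun z => G *ᵥ μ + msqrt (G * Λ * Gᵀ) *ᵥ z) := by
        rw [gaussian, Measure.map_map (by fun_prop) (by fun_prop),
          Measure.map_map (by fun_prop) (by fun_prop)]
        congr 1
        funext z
        simp only [Function.comp_apply, mulVec_add, mulVec_mulVec, ← Matrix.mul_assoc,
          mul_nonsing_inv _ hV, Matrix.one_mul]
    _ = gaussian (G *ᵥ μ) (G * Λ * Gᵀ) := by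
        rw [stdGaussian_map_mulVec_of_mem_orthogonalGroup hO, gaussian]

section InputScaling

variable {n m : ℕ} {G : Matrix (Fin m) (Fin m) ℝ} (B : Matrix (Fin n) (Fin m) ℝ)
  (P : Matrix (Fin n) (Fin n) ℝ)

lemma one_add_conj_mul_inv_eq (hG : IsUnit G.det) (hGt : Gᵀ = G) :
    1 + (B * G⁻¹)ᵀ * P * (B * G⁻¹) = G⁻¹ * (G * G + Bᵀ * P * B) * G⁻¹ := by
  rw [transpose_mul, transpose_nonsing_inv, hGt, Matrix.mul_add, Matrix.add_mul,
    nonsing_inv_mul_cancel_left _ _ hG, mul_nonsing_inv _ hG]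
  simp only [Matrix.mul_assoc]

lemma inv_one_add_conj_mul_inv_eq (hG : IsUnit G.det) (hGt : Gᵀ = G) :
    (1 + (B * G⁻¹)ᵀ * P * (B * G⁻¹))⁻¹ = G * (G * G + Bᵀ * P * B)⁻¹ * G := by
  rw [one_add_conj_mul_inv_eq B P hG hGt]
  simp only [Matrix.mul_inv_rev, nonsing_inv_nonsing_inv _ hG, Matrix.mul_assoc]

lemma inv_one_add_conj_mul_inv_mul_transpose (hG : IsUnit G.det) (hGt : Gᵀ = G) :
    (1 + (B * G⁻¹)ᵀ * P * (B * G⁻¹))⁻¹ * (B * G⁻¹)ᵀ = G * (G * G + Bᵀ * P * B)⁻¹ * Bᵀ := by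
  rw [inv_one_add_conj_mul_inv_eq B P hG hGt, transpose_mul, transpose_nonsing_inv, hGt]
  simp only [Matrix.mul_assoc, mul_nonsing_inv_cancel_left _ _ hG]

lemma mul_inv_one_add_conj_mul_inv_mul_transpose (hG : IsUnit G.det) (hGt : Gᵀ = G) :
    B * G⁻¹ * (1 + (B * G⁻¹)ᵀ * P * (B * G⁻¹))⁻¹ * (B * G⁻¹)ᵀ
      = B * (G * G + Bᵀ * P * B)⁻¹ * Bᵀ := by
  rw [Matrix.mul_assoc _ (1 + _)⁻¹, inv_one_add_conj_mul_inv_mul_transpose B P hG hGt]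
  simp only [Matrix.mul_assoc, nonsing_inv_mul_cancel_left _ _ hG]

end InputScaling

section ScaledSystem

variable {n m T : ℕ} {A : Fin T → Matrix (Fin n) (Fin n) ℝ}
  {B : Fin T → Matrix (Fin n) (Fin m) ℝ} {Srho : Fin T → Matrix (Fin m) (Fin m) ℝ}
  {G : Fin T → Matrix (Fin m) (Fin m) ℝ} {Γ : Fin (T + 1) → Matrix (Fin n) (Fin n) ℝ}

theorem eq_of_riccatiME_mul_inv_of_riccatiMI (hG : ∀ k, IsUnit (G k).det)
    (hGt : ∀ k, (G k)ᵀ = G k) (hGG : ∀ k, G k * G k = (Srho k)⁻¹ + 1)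
    {Pm : Fin (T + 1) → Matrix (Fin n) (Fin n) ℝ}
    (hME : riccatiME A (fun k => B k * (G k)⁻¹) Pm) (hMI : riccatiMI A B Srho Γ)
    (hlast : Pm (Fin.last T) = Γ (Fin.last T)) : Pm = Γ := by
  funext k
  induction k using Fin.reverseInduction with
  | last => exact hlast
  | cast k ih =>
    have key := congrArg (fun X => (A k)ᵀ * Γ k.succ * X * (Γ k.succ * A k))
      (mul_inv_one_add_conj_mul_inv_mul_transpose (B k) (Γ k.succ) (hG k) (hGt k))
    rw [hME k, hMI k, ih, ← hGG k]
    simpa only [Matrix.mul_assoc] using congrArg (_ - ·) key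

lemma gaussian_MEpol_mul_inv_eq_map_MIpol {k : Fin T} (hG : IsUnit (G k).det)
    (hGt : (G k)ᵀ = G k) (hGG : G k * G k = (Srho k)⁻¹ + 1)
    (hpos : ((Srho k)⁻¹ + 1 + (B k)ᵀ * Γ k.succ * B k).PosDef) (x : Fin n → ℝ) :
    gaussian (MEpolMean A (fun k => B k * (G k)⁻¹) Γ k x)
        (MEpolCov (fun k => B k * (G k)⁻¹) Γ k)
      = (gaussian (MIpolMean A B Srho Γ k x) (MIpolCov B Srho Γ k)).map (G k *ᵥ ·) := by
  unfold MIpolMean MIpolCov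
  rw [gaussian_map_mulVec hG hpos.inv, ← hGG, hGt]
  congr 1
  · rw [MEpolMean, MEpolCov, inv_one_add_conj_mul_inv_mul_transpose _ _ hG hGt, mulVec_neg,
      mulVec_mulVec]
    simp only [Matrix.mul_assoc]
  · exact inv_one_add_conj_mul_inv_eq _ _ hG hGt

end ScaledSystem

theorem ME_MI_state_equivalence_general
    (n m T : ℕ)
    (A : Fin T → Matrix (Fin n) (Fin n) ℝ) (B : Fin T → Matrix (Fin n) (Fin m) ℝ)
    (F : Matrix (Fin n) (Fin n) ℝ)
    (Sini : Matrix (Fin n) (Fin n) ℝ)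
    (Srho : Fin T → Matrix (Fin m) (Fin m) ℝ) (hSrho : ∀ k, (Srho k).PosDef)
    (Brho : Fin T → Matrix (Fin n) (Fin m) ℝ)
    (hBrho : ∀ k, Brho k = B k * (msqrt ((Srho k)⁻¹ + 1))⁻¹)
    (Γ : Fin (T + 1) → Matrix (Fin n) (Fin n) ℝ)
    (hpos : ∀ k : Fin T, ((Srho k)⁻¹ + 1 + (B k)ᵀ * Γ k.succ * B k).PosDef)
    (hric : riccatiMI A B Srho Γ) (hterm : Γ (Fin.last T) = F) :
    ∀ Pm : Fin (T + 1) → Matrix (Fin n) (Fin n) ℝ,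
      riccatiME A Brho Pm → Pm (Fin.last T) = F →
      (∀ k : Fin (T + 1), Pm k = Γ k) ∧
      ctrlLaw A Brho Sini (fun k x => gaussian (MEpolMean A Brho Pm k x) (MEpolCov Brho Pm k))
        = ctrlLaw A B Sini
            (fun k x => gaussian (MIpolMean A B Srho Γ k x) (MIpolCov B Srho Γ k)) := by
  intro Pm hME hPmT
  obtain rfl : Brho = fun k => B k * (msqrt ((Srho k)⁻¹ + 1))⁻¹ := funext hBrho
  have hGpd k : ((Srho k)⁻¹ + 1).PosDef := (hSrho k).inv.add_posSemidef PosSemidef.one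
  have hG k := isUnit_det_msqrt (hGpd k)
  have hGt k := transpose_msqrt (hGpd k).posSemidef
  have hGG k := msqrt_mul_self (hGpd k).posSemidef
  obtain rfl : Pm = Γ :=
    eq_of_riccatiME_mul_inv_of_riccatiMI hG hGt hGG hME hric (hPmT.trans hterm.symm)
  refine ⟨fun _ => rfl, ?_⟩
  unfold ctrlLaw
  congr 1
  funext k x
  beta_reduce
  rw [gaussian_MEpol_mul_inv_eq_map_MIpol (hG k) (hGt k) (hGG k) (hpos k),
    Measure.map_map (by fun_prop) (by fun_prop)]
  congr 1
  funext u
  simp only [Function.comp_apply, mulVec_mulVec, Matrix.mul_assoc, nonsing_inv_mul _ (hG k),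
    Matrix.mul_one]

/-- Lemma 2 of the paper: with `B̄_k = B_k^ρ = B_k (Σ_{ρ_k}^{-1}+I)^{-1/2}`,
the MaxEnt Riccati solution `Π` (with matrices `(A, B̄)` and `Π_T = F`) coincides with the MI
Riccati solution `Γ`, and the law of the state sequence of the MaxEnt closed loop coincides
with that of the MI closed loop. -/
theorem ME_MI_state_equivalence
    (n m T : ℕ) (hT : 1 ≤ T)
    (A : Fin T → Matrix (Fin n) (Fin n) ℝ) (B : Fin T → Matrix (Fin n) (Fin m) ℝ)
    (F : Matrix (Fin n) (Fin n) ℝ) (hF : F.IsSymm)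
    (Sini : Matrix (Fin n) (Fin n) ℝ) (hSini : Sini.PosDef)
    (Srho : Fin T → Matrix (Fin m) (Fin m) ℝ) (hSrho : ∀ k, (Srho k).PosDef)
    (Brho : Fin T → Matrix (Fin n) (Fin m) ℝ)
    (hBrho : ∀ k, Brho k = B k * (msqrt ((Srho k)⁻¹ + 1))⁻¹)
    (Γ : Fin (T + 1) → Matrix (Fin n) (Fin n) ℝ)
    (hpos : ∀ k : Fin T, ((Srho k)⁻¹ + 1 + (B k)ᵀ * Γ k.succ * B k).PosDef)
    (hric : riccatiMI A B Srho Γ) (hterm : Γ (Fin.last T) = F) :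
    ∀ Pm : Fin (T + 1) → Matrix (Fin n) (Fin n) ℝ,
      riccatiME A Brho Pm → Pm (Fin.last T) = F →
      (∀ k : Fin (T + 1), Pm k = Γ k) ∧
      ctrlLaw A Brho Sini (fun k x => gaussian (MEpolMean A Brho Pm k x) (MEpolCov Brho Pm k))
        = ctrlLaw A B Sini
            (fun k x => gaussian (MIpolMean A B Srho Γ k x) (MIpolCov B Srho Γ k)) :=
  ME_MI_state_equivalence_general n m T A B F Sini Srho hSrho Brho hBrho Γ hpos hric hterm

end MIDC
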